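/- (Formal energy conservation law) Under the same hypotheses and notation as the entropy identity, define e := T + β W(φ) + (1/St)·ν(φ) + (β ε²/2)|∇φ|². Then along smooth solutions, ∂_t e = (1/Pe)ΔT + β ε² div((∂_tφ)∇φ). -/

import Mathlib

open MeasureTheory Real Set Filter

noncomputable section

abbrev Euc (d : ℕ) := EuclideanSpace ℝ (Fin d)

/-- Time derivative `∂_t f` of `f : ℝ^d × ℝ → ℝ`. -/
def dt {d : ℕ} (f : Euc d × ℝ → ℝ) (p : Euc d × ℝ) : ℝ :=
  deriv (fun s => f (p.1, s)) p.2

/-- Spatial gradient `∇f` of `f : ℝ^d × ℝ → ℝ`. -/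
def gradx {d : ℕ} (f : Euc d × ℝ → ℝ) (p : Euc d × ℝ) : Euc d :=
  gradient (fun y => f (y, p.2)) p.1

/-- Spatial Laplacian `Δf` of `f : ℝ^d × ℝ → ℝ`. -/
def lapx {d : ℕ} (f : Euc d × ℝ → ℝ) (p : Euc d × ℝ) : ℝ :=
  ∑ i : Fin d, iteratedFDeriv ℝ 2 (fun y => f (y, p.2)) p.1
    ![EuclideanSpace.single i 1, EuclideanSpace.single i 1]

/-- Spatial divergence `div V` of a vector field `V : ℝ^d × ℝ → ℝ^d`. -/
def divx {d : ℕ} (V : Euc d × ℝ → Euc d) (p : Euc d × ℝ) : ℝ :=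
  ∑ i : Fin d, fderiv ℝ (fun y => V (y, p.2) i) p.1 (EuclideanSpace.single i 1)

lemma hasFDerivAt_space {d : ℕ} {F : Type*} [NormedAddCommGroup F] [NormedSpace ℝ F]
    (f : Euc d × ℝ → F) (hf : Differentiable ℝ f) (x : Euc d) (t : ℝ) :
    HasFDerivAt (fun y => f (y, t))
      ((fderiv ℝ f (x, t)).comp (ContinuousLinearMap.inl ℝ (Euc d) ℝ)) x :=
  (hf (x, t)).hasFDerivAt.comp x (hasFDerivAt_prodMk_left x t)

lemma hasDerivAt_time {d : ℕ} {F : Type*} [NormedAddCommGroup F] [NormedSpace ℝ F]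
    (f : Euc d × ℝ → F) (hf : Differentiable ℝ f) (x : Euc d) (t : ℝ) :
    HasDerivAt (fun s => f (x, s)) (fderiv ℝ f (x, t) (0, 1)) t :=
  (hf (x, t)).hasFDerivAt.comp_hasDerivAt t ((hasDerivAt_const t x).prodMk (hasDerivAt_id t))

lemma gradx_apply' {d : ℕ} (φ : Euc d × ℝ → ℝ) (hφ : Differentiable ℝ φ) (x : Euc d) (t : ℝ)
    (i : Fin d) :
    gradient (fun y => φ (y, t)) x i = fderiv ℝ φ (x, t) (EuclideanSpace.single i 1, 0) := by
  have h := hasFDerivAt_space φ hφ x t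
  have hg := hasFDerivAt_iff_hasGradientAt.mp h
  have hgr := hg.gradient
  have h2 : (inner ℝ (gradient (fun y => φ (y, t)) x) (EuclideanSpace.single i (1:ℝ)) : ℝ)
      = gradient (fun y => φ (y, t)) x i := by
    rw [EuclideanSpace.inner_single_right]; simp
  rw [← h2, hgr, InnerProductSpace.toDual_symm_apply]
  rfl

lemma norm_sq_eq' {d : ℕ} (x : Euc d) : ‖x‖ ^ 2 = ∑ i, (x i) ^ 2 := by
  rw [EuclideanSpace.norm_eq, Real.sq_sqrt (by positivity)]
  simp [sq_abs]

/-- formal energy conservation law: for smooth solutions of the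
nondimensionalized phase field system, the energy
`e = T + βW(φ) + (1/St)ν(φ) + (βε²/2)|∇φ|²` satisfies
`∂_t e = (1/Pe)ΔT + βε² div((∂_tφ)∇φ)`. -/
theorem statement12 (d : ℕ) (α β ε θ Pe St : ℝ)
    (hα : 0 < α) (hβ : 0 < β) (hε : 0 < ε) (hθ : 0 < θ) (hPe : 0 < Pe) (hSt : 0 < St)
    (W ν : ℝ → ℝ) (hW : ContDiff ℝ 2 W) (hν : ContDiff ℝ 2 ν)
    (U : Set (Euc d × ℝ)) (hU : IsOpen U)
    (φ T : Euc d × ℝ → ℝ) (hφ : ContDiff ℝ (⊤ : ℕ∞) φ) (hT : ContDiff ℝ (⊤ : ℕ∞) T)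
    (heq1 : ∀ p ∈ U, dt φ p =
      -α * (deriv W (φ p) - (1 / (β * St * θ)) * deriv ν (φ p) * T p - ε ^ 2 * lapx φ p))
    (heq2 : ∀ p ∈ U, dt T p +
        (β * deriv W (φ p) + (1 / St) * deriv ν (φ p) - β * ε ^ 2 * lapx φ p) * dt φ p =
      (1 / Pe) * lapx T p) :
    ∀ p ∈ U,
      dt (fun q => T q + β * W (φ q) + (1 / St) * ν (φ q) +
          (β * ε ^ 2 / 2) * ‖gradx φ q‖ ^ 2) p =
        (1 / Pe) * lapx T p + β * ε ^ 2 * divx (fun q => dt φ q • gradx φ q) p := by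
  intro p hp
  obtain ⟨x, t⟩ := p
  have hφ1 : Differentiable ℝ φ := hφ.differentiable (by simp)
  have hT1 : Differentiable ℝ T := hT.differentiable (by simp)
  have hDφc : ContDiff ℝ (⊤ : ℕ∞) (fderiv ℝ φ) := hφ.fderiv_right (by simp)
  have hDφ1 : Differentiable ℝ (fderiv ℝ φ) := hDφc.differentiable (by simp)
  set Dφ := fderiv ℝ φ with hDφdef
  set A := fderiv ℝ Dφ (x, t) with hAdef
  set e : Fin d → Euc d := fun i => EuclideanSpace.single i 1 with he
  -- symmetry of the second derivative
  have hsymm : ∀ v w, A v w = A w v :=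
    second_derivative_symmetric (fun y => (hφ1 y).hasFDerivAt) (hDφ1 (x, t)).hasFDerivAt
  -- time derivatives as full fderivs
  have hdtφ : ∀ q : Euc d × ℝ, dt φ q = Dφ q (0, 1) := fun q => by
    have h := hasDerivAt_time φ hφ1 q.1 q.2
    rw [Prod.mk.eta] at h
    exact h.deriv
  have hdtT : dt T (x, t) = fderiv ℝ T (x, t) (0, 1) := (hasDerivAt_time T hT1 x t).deriv
  -- gradient components
  have hgrad : ∀ q : Euc d × ℝ, ∀ i : Fin d, gradx φ q i = Dφ q (e i, 0) := fun q i => by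
    have h := gradx_apply' φ hφ1 q.1 q.2 i
    rw [Prod.mk.eta] at h
    exact h
  -- the Laplacian as a sum of second derivatives
  set inl' := ContinuousLinearMap.inl ℝ (Euc d) ℝ with hinl
  set M : ((Euc d × ℝ) →L[ℝ] ℝ) →L[ℝ] (Euc d →L[ℝ] ℝ) :=
    (ContinuousLinearMap.compL ℝ (Euc d) (Euc d × ℝ) ℝ).flip inl' with hM
  have hfd2 : HasFDerivAt (fun y => Dφ (y, t)) (A.comp inl') x :=
    hasFDerivAt_space Dφ hDφ1 x t
  have hfd3 : HasFDerivAt (fun y => M (Dφ (y, t))) (M.comp (A.comp inl')) x :=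
    M.hasFDerivAt.comp x hfd2
  have hfd4 : fderiv ℝ (fderiv ℝ (fun y' => φ (y', t))) x = M.comp (A.comp inl') := by
    have h1 : (fderiv ℝ (fun y' => φ (y', t))) = fun y => M (Dφ (y, t)) := by
      funext y
      exact (hasFDerivAt_space φ hφ1 y t).fderiv
    rw [h1, hfd3.fderiv]
  have hlap : lapx φ (x, t) = ∑ i, A (e i, 0) (e i, 0) := by
    unfold lapx
    refine Finset.sum_congr rfl fun i _ => ?_
    rw [iteratedFDeriv_two_apply]
    show fderiv ℝ (fderiv ℝ (fun y' => φ (y', t))) x (e i) (e i) = _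
    rw [hfd4]
    rfl
  -- time derivative of the squared gradient norm
  have hDt : HasDerivAt (fun s => Dφ (x, s)) (A (0, 1)) t := hasDerivAt_time Dφ hDφ1 x t
  have hDti : ∀ i : Fin d, HasDerivAt (fun s => Dφ (x, s) (e i, 0)) (A (0, 1) (e i, 0)) t :=
    fun i => by
      have h := hDt.clm_apply (hasDerivAt_const t ((e i : Euc d), (0 : ℝ)))
      simpa using h
  have hns : HasDerivAt (fun s => ‖gradx φ (x, s)‖ ^ 2)
      (∑ i, 2 * Dφ (x, t) (e i, 0) * A (0, 1) (e i, 0)) t := by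
    have h1 : HasDerivAt (fun s => ∑ i, (Dφ (x, s) (e i, 0)) ^ 2)
        (∑ i, 2 * Dφ (x, t) (e i, 0) * A (0, 1) (e i, 0)) t := by
      apply HasDerivAt.fun_sum
      intro i _
      have h := (hDti i).fun_pow 2
      norm_num at h
      convert h using 1
    apply h1.congr_of_eventuallyEq
    filter_upwards with s
    rw [norm_sq_eq']
    exact Finset.sum_congr rfl fun i _ => by rw [hgrad (x, s) i]
  -- time derivative of the full energy
  have hφt : HasDerivAt (fun s => φ (x, s)) (dt φ (x, t)) t := by
    have h := hasDerivAt_time φ hφ1 x t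
    rwa [← hdtφ (x, t)] at h
  have hTt : HasDerivAt (fun s => T (x, s)) (dt T (x, t)) t := by
    have h := hasDerivAt_time T hT1 x t
    rwa [← hdtT] at h
  have hWt : HasDerivAt (fun s => W (φ (x, s))) (deriv W (φ (x, t)) * dt φ (x, t)) t :=
    HasDerivAt.comp t ((hW.differentiable (by simp) (φ (x, t))).hasDerivAt) hφt
  have hνt : HasDerivAt (fun s => ν (φ (x, s))) (deriv ν (φ (x, t)) * dt φ (x, t)) t :=
    HasDerivAt.comp t ((hν.differentiable (by simp) (φ (x, t))).hasDerivAt) hφt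
  have hE : HasDerivAt (fun s => T (x, s) + β * W (φ (x, s)) + (1 / St) * ν (φ (x, s)) +
      (β * ε ^ 2 / 2) * ‖gradx φ (x, s)‖ ^ 2)
      (dt T (x, t) + β * (deriv W (φ (x, t)) * dt φ (x, t)) +
        (1 / St) * (deriv ν (φ (x, t)) * dt φ (x, t)) +
        (β * ε ^ 2 / 2) * ∑ i, 2 * Dφ (x, t) (e i, 0) * A (0, 1) (e i, 0)) t :=
    ((hTt.add (hWt.const_mul β)).add (hνt.const_mul (1 / St))).add (hns.const_mul (β * ε ^ 2 / 2))
  have hLHS : dt (fun q => T q + β * W (φ q) + (1 / St) * ν (φ q) +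
      (β * ε ^ 2 / 2) * ‖gradx φ q‖ ^ 2) (x, t)
      = dt T (x, t) + β * (deriv W (φ (x, t)) * dt φ (x, t)) +
        (1 / St) * (deriv ν (φ (x, t)) * dt φ (x, t)) +
        (β * ε ^ 2 / 2) * ∑ i, 2 * Dφ (x, t) (e i, 0) * A (0, 1) (e i, 0) := hE.deriv
  -- the divergence term
  have hdiv : divx (fun q => dt φ q • gradx φ q) (x, t)
      = ∑ i, (Dφ (x, t) (0, 1) * A (e i, 0) (e i, 0) +
          Dφ (x, t) (e i, 0) * A (e i, 0) (0, 1)) := by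
    unfold divx
    refine Finset.sum_congr rfl fun i _ => ?_
    have hfun : (fun y => ((fun q => dt φ q • gradx φ q) (y, (x, t).2)) i)
        = fun y => Dφ (y, t) (0, 1) * Dφ (y, t) (e i, 0) := by
      funext y
      show dt φ (y, t) * gradx φ (y, t) i = _
      rw [hdtφ (y, t), hgrad (y, t) i]
    rw [hfun]
    have hc : HasFDerivAt (fun y => Dφ (y, t) (0, 1))
        ((Dφ (x, t)).comp (0 : Euc d →L[ℝ] Euc d × ℝ) + (A.comp inl').flip ((0 : Euc d), (1:ℝ))) x :=
      hfd2.clm_apply (hasFDerivAt_const ((0 : Euc d), (1:ℝ)) x)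
    have hb : HasFDerivAt (fun y => Dφ (y, t) (e i, 0))
        ((Dφ (x, t)).comp (0 : Euc d →L[ℝ] Euc d × ℝ) + (A.comp inl').flip ((e i : Euc d), (0:ℝ))) x :=
      hfd2.clm_apply (hasFDerivAt_const ((e i : Euc d), (0:ℝ)) x)
    have hmul := hc.fun_mul hb
    rw [hmul.fderiv]
    simp only [ContinuousLinearMap.add_apply, ContinuousLinearMap.comp_apply,
      ContinuousLinearMap.zero_apply, ContinuousLinearMap.flip_apply, map_zero,
      ContinuousLinearMap.smul_apply, zero_add, smul_eq_mul, ContinuousLinearMap.coe_comp',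
      Function.comp_apply, hinl, he, ContinuousLinearMap.inl_apply]
  -- finish with algebra
  have h2 := heq2 (x, t) hp
  rw [hlap] at h2
  rw [hLHS, hdiv]
  have hsum2 : ∑ i, 2 * Dφ (x, t) (e i, 0) * A (0, 1) (e i, 0)
      = 2 * ∑ i, Dφ (x, t) (e i, 0) * A (e i, 0) (0, 1) := by
    rw [Finset.mul_sum]
    exact Finset.sum_congr rfl fun i _ => by rw [hsymm (0, 1) (e i, 0)]; ring
  have hsum1 : ∑ i, (Dφ (x, t) (0, 1) * A (e i, 0) (e i, 0) +
        Dφ (x, t) (e i, 0) * A (e i, 0) (0, 1))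
      = Dφ (x, t) (0, 1) * ∑ i, A (e i, 0) (e i, 0) +
        ∑ i, Dφ (x, t) (e i, 0) * A (e i, 0) (0, 1) := by
    rw [Finset.sum_add_distrib, Finset.mul_sum]
  rw [hsum2, hsum1, ← hdtφ (x, t)]
  linear_combination h2
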